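/- arXiv:1504.04774 — 4 statements merged into one kernel-verified Lean document; each statement's English description precedes it below -/
import Mathlib

section
/- A dynamic monetary risk measure (φ_t)_{t=0}^T is time-consistent if and only if it satisfies the Bellman principle φ_t(X) = φ_t(φ_{t+1}(X)) for all X ∈ L⁰(F_T) and all t = 0,…,T−1. -/
open MeasureTheory ProbabilityTheory

/-- A dynamic monetary risk measure is time-consistent if and only if it satisfies the
Bellman principle `φ_t(X) = φ_t(φ_{t+1}(X))` for all `X ∈ L⁰(F_T)` and `t = 0,…,T−1`. -/
theorem timeConsistent_iff_bellman {Ω : Type*} [mΩ : MeasurableSpace Ω] (μ : Measure Ω)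
    [IsProbabilityMeasure μ]
    (ℱ : ℕ → MeasurableSpace Ω) (hle : ∀ t, ℱ t ≤ mΩ) (hmonoℱ : Monotone ℱ) (T : ℕ)
    (φ : ℕ → (Ω → ℝ) → (Ω → ℝ))
    -- φ_t maps into L⁰(F_t)
    (hmeas : ∀ t ≤ T, ∀ X, Measurable[ℱ T] X → Measurable[ℱ t] (φ t X))
    -- Normalization
    (hnorm : ∀ t ≤ T, φ t 0 = 0)
    -- Monotonicity
    (hmono : ∀ t ≤ T, ∀ X Y : Ω → ℝ, Measurable[ℱ T] X → Measurable[ℱ T] Y →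
      (∀ᵐ ω ∂μ, Y ω ≤ X ω) → ∀ᵐ ω ∂μ, φ t Y ω ≤ φ t X ω)
    -- Translation invariance
    (htrans : ∀ t ≤ T, ∀ X c : Ω → ℝ, Measurable[ℱ T] X → Measurable[ℱ t] c →
      ∀ᵐ ω ∂μ, φ t (fun ω' => X ω' + c ω') ω = φ t X ω + c ω)
    -- φ_T is the identity
    (hT : ∀ X : Ω → ℝ, φ T X = X) :
    -- time-consistency
    (∀ t, t + 1 ≤ T → ∀ X Y : Ω → ℝ, Measurable[ℱ T] X → Measurable[ℱ T] Y →
      (∀ᵐ ω ∂μ, φ (t + 1) Y ω ≤ φ (t + 1) X ω) → ∀ᵐ ω ∂μ, φ t Y ω ≤ φ t X ω)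
    ↔
    -- Bellman principle
    (∀ t, t + 1 ≤ T → ∀ X : Ω → ℝ, Measurable[ℱ T] X →
      ∀ᵐ ω ∂μ, φ t X ω = φ t (φ (t + 1) X) ω) := by
  constructor
  · intro hTC t ht X hX
    set Y := φ (t + 1) X with hY
    have hYmeas : Measurable[ℱ (t + 1)] Y := hmeas (t + 1) ht X hX
    have hYT : Measurable[ℱ T] Y := hYmeas.mono (hmonoℱ ht) le_rfl
    -- φ_{t+1} Y = Y a.e.
    have hfix : ∀ᵐ ω ∂μ, φ (t + 1) Y ω = Y ω := by
      have h0 : Measurable[ℱ T] (0 : Ω → ℝ) := measurable_const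
      have := htrans (t + 1) ht 0 Y h0 hYmeas
      filter_upwards [this] with ω hω
      have hfun : (fun ω' => (0 : Ω → ℝ) ω' + Y ω') = Y := by
        funext ω'; simp
      rw [hfun] at hω
      rw [hω, hnorm (t + 1) ht]
      simp
    have h1 : ∀ᵐ ω ∂μ, φ t Y ω ≤ φ t X ω := by
      apply hTC t ht X Y hX hYT
      filter_upwards [hfix] with ω hω
      rw [hω]
    have h2 : ∀ᵐ ω ∂μ, φ t X ω ≤ φ t Y ω := by
      apply hTC t ht Y X hYT hX
      filter_upwards [hfix] with ω hω
      rw [hω]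
    filter_upwards [h1, h2] with ω h1 h2
    exact le_antisymm h2 h1
  · intro hB t ht X Y hX hY hle'
    have hXm : Measurable[ℱ T] (φ (t + 1) X) :=
      (hmeas (t + 1) ht X hX).mono (hmonoℱ ht) le_rfl
    have hYm : Measurable[ℱ T] (φ (t + 1) Y) :=
      (hmeas (t + 1) ht Y hY).mono (hmonoℱ ht) le_rfl
    have := hmono t (le_trans (Nat.le_succ t) ht) (φ (t + 1) X) (φ (t + 1) Y) hXm hYm hle'
    filter_upwards [this, hB t ht X hX, hB t ht Y hY] with ω h hx hy
    rw [hx, hy]; exact h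
end

section
/- In the GARCH(1,1) model, the time-consistent Value-at-Risk of the terminal loss satisfies the closed form ṼaR^α_t(L_T) = F_Z^{-1}(α) · sqrt(a₀ Σ_{k=0}^{T-t-2} (a₁ F_{Z²}^{-1}(α) + b)^k + σ_{t+1}² (a₁ F_{Z²}^{-1}(α) + b)^{T-t-1}) for t = 0,…,T−1. -/
/-!
Backward induction on the horizon. Conditionally on `ℱ t`, the volatility `σ (t + 1)` is known and
`Z (t + 1)` is independent, so the conditional kernel of `(σ (t + 1), Z (t + 1))` is
`δ_{σ (t + 1)} ⊗ law (Z (t + 1))`: the conditional VaR of `G (σ (t + 1), Z (t + 1))` is the VaR of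
`G (w, Z)` evaluated at `w = σ (t + 1)`. If `G (w, ·)` is monotone and continuous, that VaR is
`G (w, q)` for the quantile `q`.

One period before maturity the loss is `σ_T Z_T`, with VaR `F_Z⁻¹(α) σ_T`. Earlier, the VaR found
at `t + 1` is a nondecreasing function of `σ_{t+2}² = a₀ + (a₁ Z_{t+1}² + b) σ_{t+1}²`, hence of
`Z_{t+1}²`, so `Z_{t+1}²` is replaced by its quantile `F_{Z²}⁻¹(α) = F_Z⁻¹((1 + α)/2)²` (by
symmetry of `Z`): the variance is propagated by `v ↦ a₀ + (a₁ F_{Z²}⁻¹(α) + b) v`.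
-/

open MeasureTheory ProbabilityTheory Set

/-- The distribution function of a real random variable `Z` under `μ`. -/
noncomputable def distFun {Ω : Type*} [MeasurableSpace Ω] (μ : Measure Ω) (Z : Ω → ℝ) (x : ℝ) : ℝ :=
  (μ (Z ⁻¹' Set.Iic x)).toReal

/-- Left-continuous quantile function (generalized inverse) of a distribution function. -/
noncomputable def quantileFun (F : ℝ → ℝ) (α : ℝ) : ℝ :=
  sInf {x : ℝ | α ≤ F x}

/-- The conditional Value-at-Risk at level `α` given the sub-σ-algebra `𝔉`, realized pointwise
via the regular conditional distribution: `VaR^α_t(L)(ω) = inf {m : P(L ≤ m | 𝔉)(ω) ≥ α}`. -/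
noncomputable def condVaR {Ω : Type*} (𝔉 : MeasurableSpace Ω) [mΩ : MeasurableSpace Ω]
    [StandardBorelSpace Ω] [Nonempty Ω] (μ : Measure Ω) [IsFiniteMeasure μ]
    (α : ℝ) (L : Ω → ℝ) (ω : Ω) : ℝ :=
  sInf {m : ℝ | α ≤ ((condExpKernel μ 𝔉 ω) (L ⁻¹' Set.Iic m)).toReal}

open Filter Topology
open scoped ENNReal

lemma quantileFun_eq_of_forall_le_iff {F : ℝ → ℝ} {α q : ℝ} (h : ∀ x, α ≤ F x ↔ q ≤ x) :
    quantileFun F α = q := by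
  rw [quantileFun, show {x | α ≤ F x} = Ici q from Set.ext h, csInf_Ici]

section DistFun

variable {Ω : Type*} [MeasurableSpace Ω] {μ : Measure Ω}

lemma distFun_eq_measureReal (Y : Ω → ℝ) (x : ℝ) : distFun μ Y x = μ.real (Y ⁻¹' Iic x) := rfl

lemma distFun_le_distFun [IsFiniteMeasure μ] {Y Y' : Ω → ℝ} {x y : ℝ}
    (h : Y ⁻¹' Iic x ⊆ Y' ⁻¹' Iic y) : distFun μ Y x ≤ distFun μ Y' y :=
  measureReal_mono h

lemma distFun_comp_eq_of_map_eq {Y Y' : Ω → ℝ} (hY : Measurable Y) (hY' : Measurable Y')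
    (h : μ.map Y = μ.map Y') {g : ℝ → ℝ} (hg : Measurable g) :
    distFun μ (fun ω => g (Y ω)) = distFun μ (fun ω => g (Y' ω)) := by
  funext x
  have hmap (Y : Ω → ℝ) (hY : Measurable Y) : distFun μ (fun ω => g (Y ω)) x
      = (μ.map Y (g ⁻¹' Iic x)).toReal := by
    rw [Measure.map_apply hY (hg measurableSet_Iic)]; rfl
  rw [hmap Y hY, hmap Y' hY', h]

lemma distFun_eq_of_map_eq {Y Y' : Ω → ℝ} (hY : Measurable Y) (hY' : Measurable Y')
    (h : μ.map Y = μ.map Y') : distFun μ Y = distFun μ Y' :=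
  distFun_comp_eq_of_map_eq hY hY' h measurable_id

lemma le_distFun_comp_iff [IsFiniteMeasure μ] {Y : Ω → ℝ} {α q : ℝ}
    (hq : ∀ x, α ≤ distFun μ Y x ↔ q ≤ x) {φ : ℝ → ℝ} (hφ : Monotone φ)
    (hφq : ContinuousAt φ q) (m : ℝ) :
    α ≤ distFun μ (fun ω => φ (Y ω)) m ↔ φ q ≤ m := by
  refine ⟨fun hα => ?_, fun hm => ?_⟩
  · by_contra! hm
    obtain ⟨q', hq'q, hmq'⟩ := (hφq.eventually (lt_mem_nhds hm)).exists_lt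
    have hsub : (fun ω => φ (Y ω)) ⁻¹' Iic m ⊆ Y ⁻¹' Iic q' := fun ω hω => by
      by_contra! h
      exact (hmq'.trans_le (hφ (le_of_lt (not_le.mp h)))).not_ge hω
    exact hq'q.not_ge ((hq q').1 (hα.trans (distFun_le_distFun hsub)))
  · refine ((hq q).2 le_rfl).trans (distFun_le_distFun fun ω hω => ?_)
    exact (hφ hω).trans hm

lemma le_distFun_iff_quantileFun_le [IsProbabilityMeasure μ] {Z : Ω → ℝ} (hZ : Measurable Z)
    (hmono : StrictMono (distFun μ Z)) (hcont : Continuous (distFun μ Z)) {β : ℝ}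
    (hβ : β ∈ Ioo (0 : ℝ) 1) (x : ℝ) :
    β ≤ distFun μ Z x ↔ quantileFun (distFun μ Z) β ≤ x := by
  have : IsProbabilityMeasure (μ.map Z) := Measure.isProbabilityMeasure_map hZ.aemeasurable
  have hcdf : distFun μ Z = cdf (μ.map Z) := by
    funext x
    rw [cdf_eq_real, measureReal_def, Measure.map_apply hZ measurableSet_Iic]; rfl
  have hbot : Tendsto (distFun μ Z) atBot (𝓝 0) := hcdf ▸ tendsto_cdf_atBot _
  have htop : Tendsto (distFun μ Z) atTop (𝓝 1) := hcdf ▸ tendsto_cdf_atTop _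
  obtain ⟨a, ha⟩ := (hbot.eventually_lt_const hβ.1).exists
  obtain ⟨b, hb⟩ := (htop.eventually_const_lt hβ.2).exists
  obtain ⟨y, hy⟩ := intermediate_value_univ a b hcont ⟨ha.le, hb.le⟩
  have hiff : ∀ x, β ≤ distFun μ Z x ↔ y ≤ x := fun x => hy ▸ hmono.le_iff_le
  rw [quantileFun_eq_of_forall_le_iff hiff, hiff]

lemma distFun_sq_of_nonneg [IsProbabilityMeasure μ] {Z : Ω → ℝ} (hZ : Measurable Z)
    (hsym : μ.map Z = μ.map (fun ω => -Z ω)) {x : ℝ} (hx : 0 ≤ x) :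
    distFun μ (fun ω => Z ω ^ 2) x = 2 * distFun μ Z (√x) - 1 := by
  have hinter : (fun ω => Z ω ^ 2) ⁻¹' Iic x = Z ⁻¹' Iic √x ∩ (fun ω => -Z ω) ⁻¹' Iic √x := by
    ext ω
    simp only [mem_preimage, mem_Iic, mem_inter_iff, Real.sq_le hx, neg_le]
    exact and_comm
  have hunion : Z ⁻¹' Iic √x ∪ (fun ω => -Z ω) ⁻¹' Iic √x = univ := by
    ext ω
    simp only [mem_union, mem_preimage, mem_Iic, mem_univ, iff_true]
    by_contra! h
    linarith [Real.sqrt_nonneg x]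
  have hneg : distFun μ (fun ω => -Z ω) √x = distFun μ Z √x :=
    congrFun (distFun_eq_of_map_eq hZ.neg hZ hsym.symm) √x
  have h := measureReal_union_add_inter (μ := μ) (s := Z ⁻¹' Iic √x)
    (t := (fun ω => -Z ω) ⁻¹' Iic √x) (hZ.neg measurableSet_Iic)
  rw [hunion, probReal_univ, ← hinter] at h
  simp only [distFun_eq_measureReal] at hneg ⊢
  linarith

lemma le_distFun_sq_iff [IsProbabilityMeasure μ] {Z : Ω → ℝ} (hZ : Measurable Z)
    (hsym : μ.map Z = μ.map (fun ω => -Z ω)) (hmono : StrictMono (distFun μ Z))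
    (hcont : Continuous (distFun μ Z)) {α : ℝ} (hα : α ∈ Ioo (0 : ℝ) 1)
    (hq : 0 ≤ quantileFun (distFun μ Z) α) (x : ℝ) :
    α ≤ distFun μ (fun ω => Z ω ^ 2) x ↔ quantileFun (distFun μ Z) ((1 + α) / 2) ^ 2 ≤ x := by
  set y := quantileFun (distFun μ Z) ((1 + α) / 2)
  have hy := le_distFun_iff_quantileFun_le hZ hmono hcont
    (β := (1 + α) / 2) ⟨by linarith [hα.1], by linarith [hα.2]⟩
  have hy0 : 0 ≤ y := hq.trans <| (le_distFun_iff_quantileFun_le hZ hmono hcont hα y).1 <| by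
    linarith [(hy y).2 le_rfl, hα.2]
  rcases lt_or_ge x 0 with hx | hx
  · have hempty : (fun ω => Z ω ^ 2) ⁻¹' Iic x = ∅ :=
      eq_empty_of_forall_notMem fun ω hω => (hx.trans_le (sq_nonneg (Z ω))).not_ge hω
    rw [distFun_eq_measureReal, hempty, measureReal_empty]
    exact iff_of_false (by linarith [hα.1]) (by nlinarith)
  · rw [distFun_sq_of_nonneg hZ hsym hx, ← Real.le_sqrt hy0 hx, ← hy]
    constructor <;> intro h <;> linarith

lemma quantileFun_distFun_sq [IsProbabilityMeasure μ] {Z : Ω → ℝ} (hZ : Measurable Z)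
    (hsym : μ.map Z = μ.map (fun ω => -Z ω)) (hmono : StrictMono (distFun μ Z))
    (hcont : Continuous (distFun μ Z)) {α : ℝ} (hα : α ∈ Ioo (0 : ℝ) 1)
    (hq : 0 ≤ quantileFun (distFun μ Z) α) :
    quantileFun (distFun μ fun ω => Z ω ^ 2) α = quantileFun (distFun μ Z) ((1 + α) / 2) ^ 2 :=
  quantileFun_eq_of_forall_le_iff (le_distFun_sq_iff hZ hsym hmono hcont hα hq)

end DistFun

lemma MeasureTheory.Measure.ext_of_Iic_rat {ν ν' : Measure ℝ} [IsProbabilityMeasure ν]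
    [IsProbabilityMeasure ν'] (h : ∀ q : ℚ, ν (Iic q) = ν' (Iic q)) : ν = ν' := by
  refine ext_of_generate_finite _ Real.borel_eq_generateFrom_Iic_rat Real.isPiSystem_Iic_rat
    ?_ (by simp)
  simp only [iUnion_singleton_eq_range, mem_range, forall_exists_index, forall_apply_eq_imp_iff]
  exact h

lemma ProbabilityTheory.Indep.comap_comp {Ω β γ : Type*} {m mΩ : MeasurableSpace Ω}
    {μ : Measure Ω} [mβ : MeasurableSpace β] [mγ : MeasurableSpace γ] {Y : Ω → β} {g : β → γ}
    (h : Indep (mβ.comap Y) m μ) (hg : Measurable g) : Indep (mγ.comap (g ∘ Y)) m μ :=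
  indep_of_indep_of_le_left h <| by
    rw [← MeasurableSpace.comap_comp]; exact MeasurableSpace.comap_mono hg.comap_le

section CondVaR

variable {Ω : Type*} {𝔉 : MeasurableSpace Ω} [mΩ : MeasurableSpace Ω] {μ : Measure Ω}
  {S E : Type*} [MeasurableSpace S] [mE : MeasurableSpace E] {W : Ω → S} {Z : Ω → E}

lemma measure_inter_preimage_eq_setLIntegral_of_indep [IsFiniteMeasure μ] (h𝔉 : 𝔉 ≤ mΩ)
    (hW : Measurable[𝔉] W) (hZ : Measurable Z) (hind : Indep (mE.comap Z) 𝔉 μ)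
    {B : Set (S × E)} (hB : MeasurableSet B) {A : Set Ω} (hA : MeasurableSet[𝔉] A) :
    μ (A ∩ (fun ω => (W ω, Z ω)) ⁻¹' B) = ∫⁻ ω in A, μ.map Z (Prod.mk (W ω) ⁻¹' B) ∂μ := by
  have hW' : Measurable W := hW.mono h𝔉 le_rfl
  have hprod :
      (μ.restrict A).map (fun ω => (W ω, Z ω)) = ((μ.restrict A).map W).prod (μ.map Z) := by
    refine (Measure.prod_eq fun C D hC hD => ?_).symm
    rw [Measure.map_apply (hW'.prodMk hZ) (hC.prod hD), Measure.map_apply hW' hC,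
      Measure.map_apply hZ hD, Measure.restrict_apply ((hW'.prodMk hZ) (hC.prod hD)),
      Measure.restrict_apply (hW' hC), mul_comm,
      ← (Indep_iff _ _ _).1 hind _ _ ⟨D, hD, rfl⟩ ((hW hC).inter hA)]
    congr 1
    ext ω
    simp only [mem_inter_iff, mem_preimage, mem_prod]
    tauto
  calc μ (A ∩ (fun ω => (W ω, Z ω)) ⁻¹' B)
      = (μ.restrict A).map (fun ω => (W ω, Z ω)) B := by
        rw [Measure.map_apply (hW'.prodMk hZ) hB, Measure.restrict_apply ((hW'.prodMk hZ) hB),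
          inter_comm]
    _ = ∫⁻ s, μ.map Z (Prod.mk s ⁻¹' B) ∂(μ.restrict A).map W := by
        rw [hprod, Measure.prod_apply hB]
    _ = ∫⁻ ω in A, μ.map Z (Prod.mk (W ω) ⁻¹' B) ∂μ :=
        lintegral_map (measurable_measure_prodMk_left hB) hW'

variable [StandardBorelSpace Ω]

lemma setLIntegral_condExpKernel [IsFiniteMeasure μ] (h𝔉 : 𝔉 ≤ mΩ) {A : Set Ω}
    (hA : MeasurableSet[𝔉] A) {s : Set Ω} (hs : MeasurableSet s) :
    ∫⁻ ω in A, condExpKernel μ 𝔉 ω s ∂μ = μ (A ∩ s) := by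
  rw [← setLIntegral_trim h𝔉 (measurable_condExpKernel hs) hA,
    ← Measure.compProd_apply_prod hA hs, compProd_trim_condExpKernel h𝔉,
    Measure.map_apply _ (hA.prod hs)]
  · rfl
  · exact (measurable_id'' h𝔉).prodMk measurable_id

lemma condExpKernel_ae_eq_of_forall_setLIntegral_eq [IsFiniteMeasure μ] (h𝔉 : 𝔉 ≤ mΩ)
    {s : Set Ω} (hs : MeasurableSet s) {g : Ω → ℝ≥0∞} (hg : Measurable[𝔉] g)
    (h : ∀ A, MeasurableSet[𝔉] A → ∫⁻ ω in A, g ω ∂μ = μ (A ∩ s)) :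
    ∀ᵐ ω ∂μ, condExpKernel μ 𝔉 ω s = g ω := by
  have : IsFiniteMeasure (μ.trim h𝔉) := isFiniteMeasure_trim h𝔉
  refine ae_of_ae_trim h𝔉 <| ae_eq_of_forall_setLIntegral_eq_of_sigmaFinite
    (measurable_condExpKernel hs) hg fun A hA _ => ?_
  rw [setLIntegral_trim h𝔉 (measurable_condExpKernel hs) hA, setLIntegral_trim h𝔉 hg hA,
    setLIntegral_condExpKernel h𝔉 hA hs, h A hA]

lemma condExpKernel_preimage_ae_eq_of_indep [IsFiniteMeasure μ] (h𝔉 : 𝔉 ≤ mΩ)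
    (hW : Measurable[𝔉] W) (hZ : Measurable Z) (hind : Indep (mE.comap Z) 𝔉 μ)
    {B : Set (S × E)} (hB : MeasurableSet B) :
    ∀ᵐ ω ∂μ, condExpKernel μ 𝔉 ω ((fun ω' => (W ω', Z ω')) ⁻¹' B)
      = μ.map Z (Prod.mk (W ω) ⁻¹' B) :=
  condExpKernel_ae_eq_of_forall_setLIntegral_eq h𝔉 ((hW.mono h𝔉 le_rfl).prodMk hZ hB)
    ((measurable_measure_prodMk_left hB).comp hW) fun _ hA =>
      (measure_inter_preimage_eq_setLIntegral_of_indep h𝔉 hW hZ hind hB hA).symm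

lemma condExpKernel_map_ae_eq_of_indep [IsProbabilityMeasure μ] (h𝔉 : 𝔉 ≤ mΩ)
    (hW : Measurable[𝔉] W) (hZ : Measurable Z) (hind : Indep (mE.comap Z) 𝔉 μ)
    {G : S → E → ℝ} (hG : Measurable (Function.uncurry G)) :
    ∀ᵐ ω ∂μ, (condExpKernel μ 𝔉 ω).map (fun ω' => G (W ω') (Z ω'))
      = μ.map (fun ω' => G (W ω) (Z ω')) := by
  have hGWZ : Measurable fun ω => G (W ω) (Z ω) := hG.comp ((hW.mono h𝔉 le_rfl).prodMk hZ)
  have hGZ (w : S) : Measurable fun ω => G w (Z ω) := hG.comp (measurable_prodMk_left.comp hZ)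
  have hrat := ae_all_iff.2 fun q : ℚ => condExpKernel_preimage_ae_eq_of_indep h𝔉 hW hZ hind
    (hG measurableSet_Iic : MeasurableSet (Function.uncurry G ⁻¹' Iic (q : ℝ)))
  filter_upwards [hrat] with ω hω
  have : IsProbabilityMeasure (μ.map fun ω' => G (W ω) (Z ω')) :=
    Measure.isProbabilityMeasure_map (hGZ _).aemeasurable
  have : IsProbabilityMeasure ((condExpKernel μ 𝔉 ω).map fun ω' => G (W ω') (Z ω')) :=
    Measure.isProbabilityMeasure_map hGWZ.aemeasurable
  refine Measure.ext_of_Iic_rat fun q => ?_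
  rw [Measure.map_apply hGWZ measurableSet_Iic, Measure.map_apply (hGZ _) measurableSet_Iic]
  exact (hω q).trans (Measure.map_apply hZ (measurable_prodMk_left (hG measurableSet_Iic)))

variable [Nonempty Ω] [IsProbabilityMeasure μ] {α : ℝ}

lemma condVaR_congr_ae (h𝔉 : 𝔉 ≤ mΩ) {f g : Ω → ℝ} (hfg : f =ᵐ[μ] g) :
    condVaR 𝔉 μ α f =ᵐ[μ] condVaR 𝔉 μ α g := by
  have hkernel : ∀ᵐ ω ∂μ, f =ᵐ[condExpKernel μ 𝔉 ω] g := by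
    rw [← condExpKernel_comp_trim (μ := μ) h𝔉] at hfg
    exact ae_of_ae_trim h𝔉 (Measure.ae_ae_of_ae_comp hfg)
  filter_upwards [hkernel] with ω hω
  simp only [condVaR, measure_congr (hω.preimage _)]

lemma condVaR_eq_quantileFun_of_map_eq {f Y : Ω → ℝ} (hf : Measurable f) (hY : Measurable Y)
    {ω : Ω} (h : (condExpKernel μ 𝔉 ω).map f = μ.map Y) :
    condVaR 𝔉 μ α f ω = quantileFun (distFun μ Y) α := by
  simp only [condVaR, quantileFun, distFun, ← Measure.map_apply hf measurableSet_Iic, h,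
    Measure.map_apply hY measurableSet_Iic]

theorem condVaR_ae_eq_quantileFun_of_indep (h𝔉 : 𝔉 ≤ mΩ) (hW : Measurable[𝔉] W)
    (hZ : Measurable Z) (hind : Indep (mE.comap Z) 𝔉 μ) {G : S → E → ℝ}
    (hG : Measurable (Function.uncurry G)) :
    condVaR 𝔉 μ α (fun ω => G (W ω) (Z ω))
      =ᵐ[μ] fun ω => quantileFun (distFun μ fun ω' => G (W ω) (Z ω')) α := by
  filter_upwards [condExpKernel_map_ae_eq_of_indep h𝔉 hW hZ hind hG] with ω hω
  exact condVaR_eq_quantileFun_of_map_eq (hG.comp ((hW.mono h𝔉 le_rfl).prodMk hZ))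
    (hG.comp (measurable_prodMk_left.comp hZ)) hω

lemma condVaR_ae_eq_of_indep_of_monotone (h𝔉 : 𝔉 ≤ mΩ) (hW : Measurable[𝔉] W) {Y : Ω → ℝ}
    (hY : Measurable Y) (hind : Indep (MeasurableSpace.comap Y Real.measurableSpace) 𝔉 μ)
    {q : ℝ} (hq : ∀ x, α ≤ distFun μ Y x ↔ q ≤ x) {φ : S → ℝ → ℝ}
    (hφ : Measurable (Function.uncurry φ)) (hmono : ∀ ω, Monotone (φ (W ω)))
    (hcont : ∀ ω, ContinuousAt (φ (W ω)) q) :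
    condVaR 𝔉 μ α (fun ω => φ (W ω) (Y ω)) =ᵐ[μ] fun ω => φ (W ω) q := by
  filter_upwards [condVaR_ae_eq_quantileFun_of_indep h𝔉 hW hY hind hφ] with ω hω
  rw [hω, quantileFun_eq_of_forall_le_iff (le_distFun_comp_iff hq (hmono ω) (hcont ω))]

end CondVaR

/-- `garchVaR q a₀ c n v` is the time-consistent VaR of the terminal loss `n + 1` periods before
maturity when the next-period variance is `v`; here `q` and `c = a₁ q₂ + b` come from the
quantiles `q` of `Z` and `q₂` of `Z²`. -/
noncomputable def garchVaR (q a₀ c : ℝ) (n : ℕ) (v : ℝ) : ℝ :=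
  q * √(a₀ * ∑ k ∈ Finset.range n, c ^ k + v * c ^ n)

section GarchVaR

variable {q a₀ c : ℝ} {n : ℕ}

lemma garchVaR_zero (v : ℝ) : garchVaR q a₀ c 0 v = q * √v := by
  simp [garchVaR]

lemma garchVaR_succ (v : ℝ) : garchVaR q a₀ c (n + 1) v = garchVaR q a₀ c n (a₀ + c * v) := by
  simp only [garchVaR, Finset.sum_range_succ]
  ring_nf

lemma garchVaR_monotone (hq : 0 ≤ q) (hc : 0 ≤ c) : Monotone (garchVaR q a₀ c n) :=
  fun _ _ h => by unfold garchVaR; gcongr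

@[fun_prop]
lemma continuous_garchVaR : Continuous (garchVaR q a₀ c n) := by
  unfold garchVaR; fun_prop

end GarchVaR

section GarchStep

variable {Ω : Type*} {𝔉 : MeasurableSpace Ω} [mΩ : MeasurableSpace Ω] [StandardBorelSpace Ω]
  [Nonempty Ω] {μ : Measure Ω} [IsProbabilityMeasure μ] {α : ℝ} {W Y : Ω → ℝ}

lemma condVaR_mul_ae_eq_of_indep (h𝔉 : 𝔉 ≤ mΩ) (hW : Measurable[𝔉] W) (hW0 : ∀ ω, 0 ≤ W ω)
    (hY : Measurable Y) (hind : Indep (MeasurableSpace.comap Y Real.measurableSpace) 𝔉 μ)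
    {q : ℝ} (hq : ∀ x, α ≤ distFun μ Y x ↔ q ≤ x) :
    condVaR 𝔉 μ α (fun ω => W ω * Y ω) =ᵐ[μ] fun ω => W ω * q :=
  condVaR_ae_eq_of_indep_of_monotone h𝔉 hW hY hind hq (φ := fun w x => w * x) (by fun_prop)
    (fun ω => monotone_mul_left_of_nonneg (hW0 ω)) (fun _ => by fun_prop)

lemma condVaR_garchVaR_ae_eq (h𝔉 : 𝔉 ≤ mΩ) (hW : Measurable[𝔉] W) (hY : Measurable Y)
    (hind : Indep (MeasurableSpace.comap Y Real.measurableSpace) 𝔉 μ) {q q₂ a₀ a₁ b : ℝ}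
    (hq₂ : ∀ x, α ≤ distFun μ (fun ω => Y ω ^ 2) x ↔ q₂ ≤ x) (hq : 0 ≤ q) (ha₁ : 0 ≤ a₁)
    (hc : 0 ≤ a₁ * q₂ + b) (n : ℕ) :
    condVaR 𝔉 μ α
        (fun ω => garchVaR q a₀ (a₁ * q₂ + b) n (a₀ + a₁ * W ω ^ 2 * Y ω ^ 2 + b * W ω ^ 2))
      =ᵐ[μ] fun ω => garchVaR q a₀ (a₁ * q₂ + b) (n + 1) (W ω ^ 2) := by
  filter_upwards [condVaR_ae_eq_of_indep_of_monotone h𝔉 hW (hY.pow_const 2)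
    (hind.comap_comp (measurable_id.pow_const 2)) hq₂
    (φ := fun w y => garchVaR q a₀ (a₁ * q₂ + b) n (a₀ + a₁ * w ^ 2 * y + b * w ^ 2))
    (by fun_prop) (fun _ => (garchVaR_monotone hq hc).comp fun _ _ h => by gcongr)
    (fun _ => by fun_prop)] with ω hω
  rw [hω, garchVaR_succ]
  ring_nf

end GarchStep

theorem timeConsistent_VaR_closed_form_general {Ω : Type*} [mΩ : MeasurableSpace Ω]
    [StandardBorelSpace Ω] [Nonempty Ω] (μ : Measure Ω) [IsProbabilityMeasure μ]
    (ℱ : ℕ → MeasurableSpace Ω) (hℱ : ∀ t, ℱ t ≤ mΩ)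
    (T : ℕ) (a₀ a₁ b : ℝ) (ha₁ : 0 < a₁) (hb : 0 < b)
    (L σ Z : ℕ → Ω → ℝ)
    -- GARCH(1,1) dynamics
    (hL : ∀ t, 1 ≤ t → t ≤ T → ∀ ω, L t ω = σ t ω * Z t ω)
    (hσrec : ∀ t, 1 ≤ t → t ≤ T → ∀ ω,
      σ t ω ^ 2 = a₀ + a₁ * L (t - 1) ω ^ 2 + b * σ (t - 1) ω ^ 2)
    (hσmeas : ∀ t, Measurable[ℱ t] (σ (t + 1))) (hσpos : ∀ t ω, 0 < σ t ω)
    (hZmeas : ∀ t, Measurable (Z t))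
    -- innovations independent of the past
    (hindep : ∀ t, Indep (MeasurableSpace.comap (Z (t + 1)) Real.measurableSpace) (ℱ t) μ)
    -- identically distributed, symmetric innovations with nice distribution function
    (hident : ∀ t, 1 ≤ t → t ≤ T → μ.map (Z t) = μ.map (Z 1))
    (hsym : μ.map (Z 1) = μ.map (fun ω => -(Z 1 ω)))
    (hmono : StrictMono (distFun μ (Z 1))) (hcont : Continuous (distFun μ (Z 1)))
    (α : ℝ) (hα : α ∈ Set.Ioo (0 : ℝ) 1) (hqpos : 0 < quantileFun (distFun μ (Z 1)) α)
    -- time-consistent VaR defined by backward recursion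
    (V : ℕ → (Ω → ℝ) → Ω → ℝ)
    (hVT : ∀ X : Ω → ℝ, V T X = X)
    (hVrec : ∀ t, t < T → ∀ X : Ω → ℝ, V t X = condVaR (ℱ t) μ α (V (t + 1) X)) :
    ∀ t, t < T → ∀ᵐ ω ∂μ,
      V t (L T) ω = quantileFun (distFun μ (Z 1)) α *
        Real.sqrt (a₀ * ∑ k ∈ Finset.range (T - t - 1),
            (a₁ * quantileFun (distFun μ (fun ω' => Z 1 ω' ^ 2)) α + b) ^ k
          + σ (t + 1) ω ^ 2 *
            (a₁ * quantileFun (distFun μ (fun ω' => Z 1 ω' ^ 2)) α + b) ^ (T - t - 1)) := by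
  set q := quantileFun (distFun μ (Z 1)) α
  set q₂ := quantileFun (distFun μ fun ω' => Z 1 ω' ^ 2) α
  have hq₂ : q₂ = quantileFun (distFun μ (Z 1)) ((1 + α) / 2) ^ 2 :=
    quantileFun_distFun_sq (hZmeas 1) hsym hmono hcont hα hqpos.le
  have hc : 0 ≤ a₁ * q₂ + b := add_nonneg (mul_nonneg ha₁.le (hq₂ ▸ sq_nonneg _)) hb.le
  have hqZ (t : ℕ) (ht : t + 1 ≤ T) (x : ℝ) : α ≤ distFun μ (Z (t + 1)) x ↔ q ≤ x := by
    rw [distFun_eq_of_map_eq (hZmeas _) (hZmeas 1) (hident _ (by omega) ht)]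
    exact le_distFun_iff_quantileFun_le (hZmeas 1) hmono hcont hα x
  have hq₂Z (t : ℕ) (ht : t + 1 ≤ T) (x : ℝ) :
      α ≤ distFun μ (fun ω => Z (t + 1) ω ^ 2) x ↔ q₂ ≤ x := by
    rw [distFun_comp_eq_of_map_eq (hZmeas _) (hZmeas 1) (hident _ (by omega) ht)
      (g := fun x => x ^ 2) (by fun_prop), hq₂]
    exact le_distFun_sq_iff (hZmeas 1) hsym hmono hcont hα hqpos.le x
  have key (n : ℕ) : ∀ t, t + n + 1 = T →
      V t (L T) =ᵐ[μ] fun ω => garchVaR q a₀ (a₁ * q₂ + b) n (σ (t + 1) ω ^ 2) := by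
    induction n with
    | zero =>
      intro t ht
      obtain rfl : T = t + 1 := by omega
      rw [hVrec t (by omega), hVT, funext (hL _ (by omega) le_rfl)]
      filter_upwards [condVaR_mul_ae_eq_of_indep (hℱ t) (hσmeas t) (fun ω => (hσpos _ ω).le)
        (hZmeas _) (hindep t) (hqZ t le_rfl)] with ω hω
      rw [hω, garchVaR_zero, Real.sqrt_sq (hσpos _ ω).le, mul_comm]
    | succ n ih =>
      intro t ht
      rw [hVrec t (by omega)]
      refine (condVaR_congr_ae (hℱ t) ?_).trans (condVaR_garchVaR_ae_eq (hℱ t) (hσmeas t)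
        (hZmeas _) (hindep t) (hq₂Z t (by omega)) hqpos.le ha₁.le hc n)
      filter_upwards [ih (t + 1) (by omega)] with ω hω
      rw [hω, hσrec (t + 1 + 1) (by omega) (by omega), add_tsub_cancel_right,
        hL (t + 1) (by omega) (by omega)]
      ring_nf
  intro t ht
  exact key (T - t - 1) t (by omega)

/-- Closed form for the time-consistent Value-at-Risk of the terminal GARCH(1,1) loss:
`ṼaR^α_t(L_T) = F_Z^{-1}(α) √(a₀ Σ_{k=0}^{T-t-2} (a₁ F_{Z²}^{-1}(α) + b)^k
  + σ_{t+1}² (a₁ F_{Z²}^{-1}(α) + b)^{T-t-1})`. -/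
theorem timeConsistent_VaR_closed_form {Ω : Type*} [mΩ : MeasurableSpace Ω]
    [StandardBorelSpace Ω] [Nonempty Ω] (μ : Measure Ω) [IsProbabilityMeasure μ]
    (ℱ : ℕ → MeasurableSpace Ω) (hℱ : ∀ t, ℱ t ≤ mΩ) (hmonoℱ : Monotone ℱ)
    (T : ℕ) (a₀ a₁ b : ℝ) (ha₀ : 0 < a₀) (ha₁ : 0 < a₁) (hb : 0 < b)
    (L σ Z : ℕ → Ω → ℝ)
    -- GARCH(1,1) dynamics
    (hL : ∀ t, 1 ≤ t → t ≤ T → ∀ ω, L t ω = σ t ω * Z t ω)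
    (hσrec : ∀ t, 1 ≤ t → t ≤ T → ∀ ω,
      σ t ω ^ 2 = a₀ + a₁ * L (t - 1) ω ^ 2 + b * σ (t - 1) ω ^ 2)
    (hσmeas : ∀ t, Measurable[ℱ t] (σ (t + 1))) (hσpos : ∀ t ω, 0 < σ t ω)
    (hZmeas : ∀ t, Measurable (Z t))
    -- innovations independent of the past
    (hindep : ∀ t, Indep (MeasurableSpace.comap (Z (t + 1)) Real.measurableSpace) (ℱ t) μ)
    -- identically distributed, symmetric innovations with nice distribution function
    (hident : ∀ t, 1 ≤ t → t ≤ T → μ.map (Z t) = μ.map (Z 1))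
    (hsym : μ.map (Z 1) = μ.map (fun ω => -(Z 1 ω)))
    (hmono : StrictMono (distFun μ (Z 1))) (hcont : Continuous (distFun μ (Z 1)))
    (α : ℝ) (hα : α ∈ Set.Ioo (0 : ℝ) 1) (hqpos : 0 < quantileFun (distFun μ (Z 1)) α)
    -- time-consistent VaR defined by backward recursion
    (V : ℕ → (Ω → ℝ) → Ω → ℝ)
    (hVT : ∀ X : Ω → ℝ, V T X = X)
    (hVrec : ∀ t, t < T → ∀ X : Ω → ℝ, V t X = condVaR (ℱ t) μ α (V (t + 1) X)) :
    ∀ t, t < T → ∀ᵐ ω ∂μ,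
      V t (L T) ω = quantileFun (distFun μ (Z 1)) α *
        Real.sqrt (a₀ * ∑ k ∈ Finset.range (T - t - 1),
            (a₁ * quantileFun (distFun μ (fun ω' => Z 1 ω' ^ 2)) α + b) ^ k
          + σ (t + 1) ω ^ 2 *
            (a₁ * quantileFun (distFun μ (fun ω' => Z 1 ω' ^ 2)) α + b) ^ (T - t - 1)) :=
  timeConsistent_VaR_closed_form_general (mΩ := mΩ) μ ℱ hℱ T a₀ a₁ b ha₁ hb L σ Z hL hσrec hσmeas
    hσpos hZmeas hindep hident hsym hmono hcont α hα hqpos V hVT hVrec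
end

section
/- In the GARCH(1,1) model, the upper bound ÂVaR^α_t(L_T) := κ · sqrt(a₀ Σ_{k=0}^{T-t-2} (a₁ κ₂ + b)^k + σ_{t+1}² (a₁ κ₂ + b)^{T-t-1}), where κ = (1/(1−α)) ∫_α^1 F_Z^{-1}(u) du and κ₂ = (1/(1−α)) ∫_α^1 F_{Z²}^{-1}(u) du, satisfies ÃVaR^α_t(L_T) ≤ ÂVaR^α_t(L_T) for all t = 0,…,T−1. -/
open MeasureTheory ProbabilityTheory Set

/-!
Fix `t`. If `X ≤ g(·, W)` a.s., where `g(ω, ·)` is increasing and continuous, `g(·, z)` is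
`ℱ_t`-measurable and `W` is independent of `ℱ_t`, then at every level `u` the event
`{W ≤ F_W⁻¹(u)}` has conditional probability `F_W(F_W⁻¹(u)) ≥ u` and on it
`X ≤ g(ω, F_W⁻¹(u))`, so `VaR^u_t(X) ≤ g(ω, F_W⁻¹(u))`. Passing to the limit along rational levels,
this holds outside a single null set at every continuity point `u` of `F_W⁻¹`, hence for almost
every `u`, and averaging over `u ∈ (α, 1)` bounds `AVaR^α_t(X)`.

At the last step `L_T = σ_T Z_T` and `g` is linear, giving `σ_T κ`. At an earlier step, the GARCH
recursion turns the bound for time `t + 1` into `κ √(D + E Z²_{t+1})` with `ℱ_t`-measurable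
`D, E ≥ 0`, and Jensen's inequality for the concave square root moves the average over `u` inside
the root, where it replaces `Z²_{t+1}` by `κ₂`.
-/

open Filter Topology

section Quantile

variable (ν : Measure ℝ)

lemma bddBelow_setOf_le_cdf {u : ℝ} (hu : 0 < u) : BddBelow {x | u ≤ cdf ν x} := by
  obtain ⟨x₀, hx₀⟩ :=
    ((tendsto_cdf_atBot ν).eventually (eventually_lt_nhds hu)).exists_forall_of_atBot
  exact ⟨x₀, fun x hx => le_of_not_gt fun hlt => (hx₀ x hlt.le).not_ge hx⟩

lemma nonempty_setOf_le_cdf {u : ℝ} (hu : u < 1) : {x | u ≤ cdf ν x}.Nonempty :=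
  ((tendsto_cdf_atTop ν).eventually (eventually_gt_nhds hu)).exists.imp fun _ => le_of_lt

lemma quantileFun_cdf_le_iff [IsProbabilityMeasure ν] {u : ℝ} (hu : u ∈ Ioo 0 1) (x : ℝ) :
    quantileFun (cdf ν) u ≤ x ↔ u ≤ cdf ν x := by
  refine ⟨fun hx => le_trans ?_ (monotone_cdf ν hx),
    fun hx => csInf_le (bddBelow_setOf_le_cdf ν hu.1) hx⟩
  have hright : ∀ y ∈ Ioi (quantileFun (cdf ν) u), u ≤ cdf ν y := fun y hy =>
    let ⟨s, hs, hsy⟩ := exists_lt_of_csInf_lt (nonempty_setOf_le_cdf ν hu.2) hy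
    hs.trans (monotone_cdf ν hsy.le)
  exact ge_of_tendsto ((cdf ν).right_continuous _ |>.mono Ioi_subset_Ici_self)
    (eventually_nhdsWithin_of_forall hright)

lemma monotoneOn_quantileFun_cdf [IsProbabilityMeasure ν] :
    MonotoneOn (quantileFun (cdf ν)) (Ioo 0 1) :=
  fun _ hu _ hv huv => (quantileFun_cdf_le_iff ν hu _).2 <|
    huv.trans ((quantileFun_cdf_le_iff ν hv _).1 le_rfl)

lemma volume_Ioo_inter_Iic {c : ℝ} (hc : c ∈ Icc (0 : ℝ) 1) :
    volume (Ioo 0 1 ∩ Iic c) = ENNReal.ofReal c := by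
  refine le_antisymm ?_ ?_
  · calc volume (Ioo 0 1 ∩ Iic c) ≤ volume (Ioc 0 c) :=
          measure_mono fun x (hx : x ∈ Ioo 0 1 ∩ Iic c) => ⟨hx.1.1, hx.2⟩
      _ = _ := by simp
  · calc ENNReal.ofReal c = volume (Ioo 0 c) := by simp
      _ ≤ _ := measure_mono fun x (hx : x ∈ Ioo 0 c) =>
          (⟨⟨hx.1, hx.2.trans_le hc.2⟩, hx.2.le⟩ : x ∈ Ioo 0 1 ∩ Iic c)

lemma map_quantileFun_cdf [IsProbabilityMeasure ν] :
    (volume.restrict (Ioo 0 1)).map (quantileFun (cdf ν)) = ν := by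
  have : IsFiniteMeasure (volume.restrict (Ioo (0 : ℝ) 1)) := isFiniteMeasure_restrict.2 (by simp)
  refine Measure.ext_of_Iic _ _ fun x => ?_
  rw [Measure.map_apply_of_aemeasurable (aemeasurable_restrict_of_monotoneOn measurableSet_Ioo
    (monotoneOn_quantileFun_cdf ν)) measurableSet_Iic, Measure.restrict_apply' measurableSet_Ioo,
    ← ofReal_cdf, ← volume_Ioo_inter_Iic ⟨cdf_nonneg ν x, cdf_le_one ν x⟩, inter_comm]
  congr 1
  ext u
  simp only [mem_inter_iff, mem_preimage, mem_Iic, and_congr_right_iff]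
  exact fun hu => quantileFun_cdf_le_iff ν hu x

lemma integrableOn_quantileFun_cdf [IsProbabilityMeasure ν] (h : Integrable id ν) :
    IntegrableOn (quantileFun (cdf ν)) (Ioo 0 1) := by
  rw [← map_quantileFun_cdf ν] at h
  exact (integrable_map_measure aestronglyMeasurable_id (aemeasurable_restrict_of_monotoneOn
    measurableSet_Ioo (monotoneOn_quantileFun_cdf ν))).1 h

end Quantile

section DistFun

variable {Ω : Type*} [MeasurableSpace Ω] (μ : Measure Ω) {W : Ω → ℝ}

lemma ProbabilityTheory.IdentDistrib.distFun_eq {W' : Ω → ℝ} (h : IdentDistrib W W' μ μ) :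
    distFun μ W = distFun μ W' :=
  funext fun _ => congrArg ENNReal.toReal (h.measure_mem_eq measurableSet_Iic)

variable [IsProbabilityMeasure μ]

lemma distFun_eq_cdf_map (hW : Measurable W) : distFun μ W = cdf (μ.map W) := by
  have := Measure.isProbabilityMeasure_map (μ := μ) hW.aemeasurable
  ext x
  rw [cdf_eq_real, map_measureReal_apply hW measurableSet_Iic]
  rfl

lemma quantileFun_distFun_le_iff (hW : Measurable W) {u : ℝ} (hu : u ∈ Ioo 0 1) (x : ℝ) :
    quantileFun (distFun μ W) u ≤ x ↔ u ≤ distFun μ W x := by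
  have := Measure.isProbabilityMeasure_map (μ := μ) hW.aemeasurable
  rw [distFun_eq_cdf_map μ hW]
  exact quantileFun_cdf_le_iff _ hu x

lemma monotoneOn_quantileFun_distFun (hW : Measurable W) :
    MonotoneOn (quantileFun (distFun μ W)) (Ioo 0 1) := by
  have := Measure.isProbabilityMeasure_map (μ := μ) hW.aemeasurable
  rw [distFun_eq_cdf_map μ hW]
  exact monotoneOn_quantileFun_cdf _

lemma integrableOn_quantileFun_distFun (hW : Measurable W) (hWi : Integrable W μ) :
    IntegrableOn (quantileFun (distFun μ W)) (Ioo 0 1) := by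
  have := Measure.isProbabilityMeasure_map (μ := μ) hW.aemeasurable
  rw [distFun_eq_cdf_map μ hW]
  exact integrableOn_quantileFun_cdf _
    ((integrable_map_measure aestronglyMeasurable_id hW.aemeasurable).2 hWi)

lemma quantileFun_distFun_nonneg (hW : Measurable W) (hW0 : 0 ≤ W) {u : ℝ}
    (hu : u ∈ Ioo 0 1) : 0 ≤ quantileFun (distFun μ W) u := by
  by_contra! hneg
  have hempty : W ⁻¹' Iic (quantileFun (distFun μ W) u) = ∅ :=
    eq_empty_of_forall_notMem fun ω hω => (hneg.trans_le' hω).not_ge (hW0 ω)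
  have := (quantileFun_distFun_le_iff μ hW hu _).1 le_rfl
  rw [distFun, hempty, measure_empty, ENNReal.toReal_zero] at this
  exact hu.1.not_ge this

end DistFun

section Integrals

variable {α : Type*} [MeasurableSpace α] {μ : Measure α} {f g : α → ℝ}

lemma integral_le_of_ae_le_of_integral_nonneg (hg : Integrable g μ) (hg0 : 0 ≤ ∫ x, g x ∂μ)
    (hfg : f ≤ᵐ[μ] g) : ∫ x, f x ∂μ ≤ ∫ x, g x ∂μ := by
  by_cases hf : Integrable f μ
  · exact integral_mono_ae hf hg hfg
  · rwa [integral_undef hf]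

lemma Real.sqrt_le_one_add_abs (x : ℝ) : √x ≤ 1 + |x| :=
  (Real.sqrt_le_left (by positivity)).2 (by nlinarith [abs_nonneg x, le_abs_self x])

lemma MeasureTheory.Integrable.sqrt [IsFiniteMeasure μ] (hf : Integrable f μ) :
    Integrable (fun x => √(f x)) μ := by
  refine ((integrable_const 1).add hf.abs).mono'
    (Real.continuous_sqrt.comp_aestronglyMeasurable hf.1) (ae_of_all _ fun x => ?_)
  rw [Real.norm_eq_abs, abs_of_nonneg (Real.sqrt_nonneg _)]
  exact Real.sqrt_le_one_add_abs _

lemma integral_sqrt_le_sqrt_integral [IsProbabilityMeasure μ] (hf : Integrable f μ)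
    (hf0 : 0 ≤ᵐ[μ] f) : ∫ x, √(f x) ∂μ ≤ √(∫ x, f x ∂μ) :=
  Real.strictConcaveOn_sqrt.concaveOn.le_map_integral Real.continuous_sqrt.continuousOn
    isClosed_Ici hf0 hf hf.sqrt

lemma MeasureTheory.IntegrableOn.integrable_cond {s : Set α} (hf : IntegrableOn f s μ)
    (hs : μ s ≠ 0) : Integrable f μ[|s] :=
  hf.smul_measure (ENNReal.inv_ne_top.2 hs)

end Integrals

section UniformLevels

variable {a b : ℝ}

lemma isProbabilityMeasure_cond_Ioo (hab : a < b) : IsProbabilityMeasure volume[|Ioo a b] :=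
  cond_isProbabilityMeasure_of_finite (by simp [hab]) (by simp)

lemma inv_sub_mul_intervalIntegral_eq_integral_cond (hab : a < b) (f : ℝ → ℝ) :
    (b - a)⁻¹ * ∫ u in a..b, f u = ∫ u, f u ∂volume[|Ioo a b] := by
  rw [intervalIntegral.integral_of_le hab.le, integral_Ioc_eq_integral_Ioo,
    ProbabilityTheory.cond, integral_smul_measure, Real.volume_Ioo, ENNReal.toReal_inv,
    ENNReal.toReal_ofReal (sub_nonneg.2 hab.le), smul_eq_mul]

lemma integrable_cond_quantileFun_distFun {Ω : Type*} [MeasurableSpace Ω] {μ : Measure Ω}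
    [IsProbabilityMeasure μ] {W : Ω → ℝ} (hW : Measurable W) (hWi : Integrable W μ)
    {α : ℝ} (hα : 0 ≤ α) (hα1 : α < 1) :
    Integrable (quantileFun (distFun μ W)) volume[|Ioo α 1] :=
  ((integrableOn_quantileFun_distFun μ hW hWi).mono_set
    (Ioo_subset_Ioo_left hα)).integrable_cond (by simp [hα1])

end UniformLevels

section CondExpKernel

variable {Ω : Type*} {m : MeasurableSpace Ω} [mΩ : MeasurableSpace Ω] [StandardBorelSpace Ω]
  {μ : Measure Ω} [IsFiniteMeasure μ]

lemma ae_ae_condExpKernel_of_ae (hm : m ≤ mΩ) {p : Ω → Prop} (h : ∀ᵐ ω ∂μ, p ω) :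
    ∀ᵐ ω ∂μ, ∀ᵐ ω' ∂condExpKernel μ m ω, p ω' := by
  rw [← condExpKernel_comp_trim (μ := μ) hm] at h
  exact ae_of_ae_trim hm (Measure.ae_ae_of_ae_comp h)

lemma ae_ae_condExpKernel_eq (hm : m ≤ mΩ) {M : Ω → ℝ} (hM : Measurable[m] M) :
    ∀ᵐ ω ∂μ, ∀ᵐ ω' ∂condExpKernel μ m ω, M ω' = M ω := by
  have hdiag : @Measurable Ω (Ω × Ω) mΩ (m.prod mΩ) Function.diag :=
    (measurable_id'' hm).prodMk measurable_id
  have hmeas : MeasurableSet[m.prod mΩ] {p : Ω × Ω | M p.2 = M p.1} :=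
    @measurableSet_eq_fun _ _ (m.prod mΩ) _ _ _ _
      ((hM.mono hm le_rfl).comp (@measurable_snd Ω Ω m mΩ)) (hM.comp (@measurable_fst Ω Ω m mΩ))
  have h : ∀ᵐ p ∂(μ.trim hm ⊗ₘ condExpKernel μ m), M p.2 = M p.1 := by
    rw [compProd_trim_condExpKernel, ae_map_iff (mβ := m.prod mΩ)
      (@Measurable.aemeasurable _ _ _ (m.prod mΩ) _ μ hdiag) hmeas]
    exact ae_of_all _ fun _ => rfl
  exact ae_of_ae_trim hm (Measure.ae_ae_of_ae_compProd h)

lemma condExpKernel_real_preimage_ae_eq_of_indep (hm : m ≤ mΩ) {β : Type*}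
    [mβ : MeasurableSpace β] {W : Ω → β} (hW : Measurable W) (hind : Indep (mβ.comap W) m μ)
    {C : Set β} (hC : MeasurableSet C) :
    ∀ᵐ ω ∂μ, (condExpKernel μ m ω).real (W ⁻¹' C) = μ.real (W ⁻¹' C) := by
  filter_upwards [condExpKernel_ae_eq_condExp hm (hW hC), condExp_indep_eq hW.comap_le hm
    ((stronglyMeasurable_const (β := ℝ)).indicator ⟨C, hC, rfl⟩) hind] with ω h1 h2
  rw [h1, h2, integral_indicator_const _ (hW hC), smul_eq_mul, mul_one]

lemma condVaR_le_of_ae_le [Nonempty Ω] (hm : m ≤ mΩ) {X M : Ω → ℝ} {B : Set Ω}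
    (hB : ∀ᵐ ω ∂μ, (condExpKernel μ m ω).real B = μ.real B) (hM : Measurable[m] M)
    (hM0 : 0 ≤ M) (hXM : ∀ᵐ ω ∂μ, ω ∈ B → X ω ≤ M ω) :
    ∀ᵐ ω ∂μ, ∀ u ≤ μ.real B, condVaR m μ u X ω ≤ M ω := by
  filter_upwards [hB, ae_ae_condExpKernel_of_ae hm hXM, ae_ae_condExpKernel_eq hm hM]
    with ω hBω hXω hMω u hu
  have hB_le : B ≤ᵐ[condExpKernel μ m ω] X ⁻¹' Iic (M ω) := by
    filter_upwards [hXω, hMω] with ω' hX hM hB'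
    exact (hX hB').trans hM.le
  have hmem : u ≤ (condExpKernel μ m ω).real (X ⁻¹' Iic (M ω)) :=
    hu.trans (hBω ▸ ENNReal.toReal_mono (measure_ne_top _ _) (measure_mono_ae hB_le))
  by_cases hbdd : BddBelow {x | u ≤ (condExpKernel μ m ω).real (X ⁻¹' Iic x)}
  · exact csInf_le hbdd hmem
  -- `condVaR` is then the junk value `sInf = 0`, which is why `0 ≤ M` is assumed.
  · exact (Real.sInf_of_not_bddBelow hbdd).trans_le (hM0 ω)

end CondExpKernel

section Levels

variable {Ω : Type*} {m : MeasurableSpace Ω} [mΩ : MeasurableSpace Ω] [StandardBorelSpace Ω]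
  [Nonempty Ω] {μ : Measure Ω} [IsProbabilityMeasure μ] {W X : Ω → ℝ} {g : Ω → ℝ → ℝ} {α : ℝ}

lemma condVaR_le_quantileFun (hm : m ≤ mΩ) (hW : Measurable W)
    (hind : Indep (Real.measurableSpace.comap W) m μ) (hα : 0 ≤ α)
    (hgm : ∀ z, Measurable[m] fun ω => g ω z) (hg : ∀ ω, Monotone (g ω))
    (hgc : ∀ ω, Continuous (g ω))
    (hg0 : ∀ ω, ∀ u ∈ Ioo α 1, 0 ≤ g ω (quantileFun (distFun μ W) u))
    (hXg : ∀ᵐ ω ∂μ, X ω ≤ g ω (W ω)) :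
    ∀ᵐ ω ∂μ, ∀ u ∈ Ioo α 1, ContinuousWithinAt (quantileFun (distFun μ W)) (Ioo 0 1) u →
      condVaR m μ u X ω ≤ g ω (quantileFun (distFun μ W) u) := by
  set q := quantileFun (distFun μ W)
  have hlevel : ∀ r : ℚ, ∀ᵐ ω ∂μ, (r : ℝ) ∈ Ioo α 1 → ∀ u ≤ (r : ℝ),
      condVaR m μ u X ω ≤ g ω (q r) := by
    intro r
    by_cases hr : (r : ℝ) ∈ Ioo α 1
    swap
    · exact ae_of_all _ fun _ h => absurd h hr
    have hrB : (r : ℝ) ≤ μ.real (W ⁻¹' Iic (q r)) :=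
      (quantileFun_distFun_le_iff μ hW ⟨hα.trans_lt hr.1, hr.2⟩ _).1 le_rfl
    filter_upwards [condVaR_le_of_ae_le hm
      (condExpKernel_real_preimage_ae_eq_of_indep hm hW hind measurableSet_Iic) (hgm _)
      (fun ω => hg0 ω r hr) (hXg.mono fun ω h hB => h.trans (hg ω hB))] with ω h _ u hu
    exact h u (hu.trans hrB)
  filter_upwards [ae_all_iff.2 hlevel] with ω hω u hu hcont
  have hbound : ∀ r ∈ Ioo u 1, condVaR m μ u X ω ≤ g ω (q r) := by
    intro r hr
    obtain ⟨s, hus, hsr⟩ := exists_rat_btwn hr.1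
    have hs : (s : ℝ) ∈ Ioo α 1 := ⟨hu.1.trans hus, hsr.trans hr.2⟩
    refine (hω s hs u hus.le).trans (hg ω ?_)
    exact monotoneOn_quantileFun_distFun μ hW ⟨hα.trans_lt hs.1, hs.2⟩
      ⟨(hα.trans_lt hu.1).trans hr.1, hr.2⟩ hsr.le
  have := left_nhdsWithin_Ioo_neBot hu.2
  have hlim : Tendsto (fun r => g ω (q r)) (𝓝[Ioo u 1] u) (𝓝 (g ω (q u))) :=
    ((hgc ω).tendsto _).comp (hcont.mono fun r hr => ⟨(hα.trans_lt hu.1).trans hr.1, hr.2⟩)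
  exact ge_of_tendsto hlim (eventually_nhdsWithin_of_forall hbound)

lemma integral_condVaR_le_integral_quantileFun (hm : m ≤ mΩ) (hW : Measurable W)
    (hind : Indep (Real.measurableSpace.comap W) m μ) (hα : 0 ≤ α)
    (hgm : ∀ z, Measurable[m] fun ω => g ω z) (hg : ∀ ω, Monotone (g ω))
    (hgc : ∀ ω, Continuous (g ω))
    (hg0 : ∀ ω, ∀ u ∈ Ioo α 1, 0 ≤ g ω (quantileFun (distFun μ W) u))
    (hgi : ∀ ω, Integrable (fun u => g ω (quantileFun (distFun μ W) u)) volume[|Ioo α 1])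
    (hXg : ∀ᵐ ω ∂μ, X ω ≤ g ω (W ω)) :
    ∀ᵐ ω ∂μ, ∫ u, condVaR m μ u X ω ∂volume[|Ioo α 1]
      ≤ ∫ u, g ω (quantileFun (distFun μ W) u) ∂volume[|Ioo α 1] := by
  have hdisc := (monotoneOn_quantileFun_distFun μ hW).countable_not_continuousWithinAt
  have hlevels : ∀ᵐ u ∂volume[|Ioo α 1],
      u ∈ Ioo α 1 ∧ ContinuousWithinAt (quantileFun (distFun μ W)) (Ioo 0 1) u := by
    filter_upwards [ae_cond_mem measurableSet_Ioo,
      cond_absolutelyContinuous.ae_le (hdisc.ae_notMem volume)] with u hu hcont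
    exact ⟨hu, not_not.1 fun h => hcont ⟨⟨hα.trans_lt hu.1, hu.2⟩, h⟩⟩
  filter_upwards [condVaR_le_quantileFun hm hW hind hα hgm hg hgc hg0 hXg] with ω hω
  exact integral_le_of_ae_le_of_integral_nonneg (hgi ω)
    (integral_nonneg_of_ae (hlevels.mono fun u hu => hg0 ω u hu.1))
    (hlevels.mono fun u hu => hω u hu.1 hu.2)

lemma integral_condVaR_le_mul_integral_quantileFun (hm : m ≤ mΩ) (hW : Measurable W)
    (hind : Indep (Real.measurableSpace.comap W) m μ) (hα : 0 ≤ α) (hα1 : α < 1)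
    (hWi : Integrable W μ) (hq0 : ∀ u ∈ Ioo α 1, 0 ≤ quantileFun (distFun μ W) u)
    {S : Ω → ℝ} (hS : Measurable[m] S) (hS0 : 0 ≤ S) (hXS : ∀ᵐ ω ∂μ, X ω ≤ S ω * W ω) :
    ∀ᵐ ω ∂μ, ∫ u, condVaR m μ u X ω ∂volume[|Ioo α 1]
      ≤ S ω * ∫ u, quantileFun (distFun μ W) u ∂volume[|Ioo α 1] := by
  have hqi := integrable_cond_quantileFun_distFun hW hWi hα hα1
  filter_upwards [integral_condVaR_le_integral_quantileFun (g := fun ω z => S ω * z) hm hW hind hα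
    (fun z => hS.mul_const z) (fun ω => monotone_mul_left_of_nonneg (hS0 ω))
    (fun ω => continuous_const_mul _) (fun ω u hu => mul_nonneg (hS0 ω) (hq0 u hu))
    (fun ω => hqi.const_mul _) hXS] with ω hω
  rwa [integral_const_mul] at hω

lemma integral_condVaR_le_mul_sqrt_integral_quantileFun (hm : m ≤ mΩ) (hW : Measurable W)
    (hind : Indep (Real.measurableSpace.comap W) m μ) (hα : 0 ≤ α) (hα1 : α < 1)
    (hWi : Integrable W μ) (hW0 : 0 ≤ W) {κ : ℝ} (hκ : 0 ≤ κ) {D E : Ω → ℝ}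
    (hD : Measurable[m] D) (hE : Measurable[m] E) (hD0 : 0 ≤ D) (hE0 : 0 ≤ E)
    (hXW : ∀ᵐ ω ∂μ, X ω ≤ κ * √(D ω + E ω * W ω)) :
    ∀ᵐ ω ∂μ, ∫ u, condVaR m μ u X ω ∂volume[|Ioo α 1]
      ≤ κ * √(D ω + E ω * ∫ u, quantileFun (distFun μ W) u ∂volume[|Ioo α 1]) := by
  have := isProbabilityMeasure_cond_Ioo hα1
  have hqi := integrable_cond_quantileFun_distFun hW hWi hα hα1
  have hfi : ∀ ω, Integrable (fun u => D ω + E ω * quantileFun (distFun μ W) u)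
      volume[|Ioo α 1] := fun ω => (integrable_const _).add (hqi.const_mul _)
  have hf0 : ∀ ω, ∀ u ∈ Ioo α 1, 0 ≤ D ω + E ω * quantileFun (distFun μ W) u :=
    fun ω u hu => add_nonneg (hD0 ω) (mul_nonneg (hE0 ω)
      (quantileFun_distFun_nonneg μ hW hW0 ⟨hα.trans_lt hu.1, hu.2⟩))
  filter_upwards [integral_condVaR_le_integral_quantileFun (g := fun ω z => κ * √(D ω + E ω * z))
    hm hW hind hα (fun z => ((hD.add (hE.mul_const z)).sqrt).const_mul κ)
    (fun ω _ _ h => mul_le_mul_of_nonneg_left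
      (Real.sqrt_le_sqrt (add_le_add_right (mul_le_mul_of_nonneg_left h (hE0 ω)) _)) hκ)
    (fun ω => by fun_prop) (fun ω _ _ => mul_nonneg hκ (Real.sqrt_nonneg _))
    (fun ω => (hfi ω).sqrt.const_mul κ) hXW] with ω hω
  calc _ ≤ _ := hω
    _ = κ * ∫ u, √(D ω + E ω * quantileFun (distFun μ W) u) ∂volume[|Ioo α 1] :=
        integral_const_mul _ _
    _ ≤ κ * √(∫ u, D ω + E ω * quantileFun (distFun μ W) u ∂volume[|Ioo α 1]) :=
        mul_le_mul_of_nonneg_left (integral_sqrt_le_sqrt_integral (hfi ω)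
          ((ae_cond_mem measurableSet_Ioo).mono (hf0 ω))) hκ
    _ = _ := by
        rw [integral_add (integrable_const _) (hqi.const_mul _), integral_const,
          integral_const_mul, probReal_univ, one_smul]

end Levels

theorem timeConsistent_AVaR_upper_bound_general {Ω : Type*} [mΩ : MeasurableSpace Ω]
    [StandardBorelSpace Ω] [Nonempty Ω] (μ : Measure Ω) [IsProbabilityMeasure μ]
    (ℱ : ℕ → MeasurableSpace Ω) (hℱ : ∀ t, ℱ t ≤ mΩ)
    (T : ℕ) (a₀ a₁ b : ℝ) (ha₀ : 0 < a₀) (ha₁ : 0 < a₁) (hb : 0 < b)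
    (L σ Z : ℕ → Ω → ℝ)
    -- GARCH(1,1) dynamics
    (hL : ∀ t, 1 ≤ t → t ≤ T → ∀ ω, L t ω = σ t ω * Z t ω)
    (hσrec : ∀ t, 1 ≤ t → t ≤ T → ∀ ω,
      σ t ω ^ 2 = a₀ + a₁ * L (t - 1) ω ^ 2 + b * σ (t - 1) ω ^ 2)
    (hσmeas : ∀ t, Measurable[ℱ t] (σ (t + 1))) (hσpos : ∀ t ω, 0 < σ t ω)
    (hZmeas : ∀ t, Measurable (Z t))
    -- innovations independent of the past
    (hindep : ∀ t, Indep (MeasurableSpace.comap (Z (t + 1)) Real.measurableSpace) (ℱ t) μ)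
    -- identically distributed, symmetric innovations with nice distribution function
    (hident : ∀ t, 1 ≤ t → t ≤ T → μ.map (Z t) = μ.map (Z 1))
    (α : ℝ) (hα : α ∈ Set.Ioo (0 : ℝ) 1) (hqpos : 0 < quantileFun (distFun μ (Z 1)) α)
    (hZ2int : Integrable (fun ω => Z 1 ω ^ 2) μ)
    -- time-consistent AVaR defined by backward recursion
    (AV : ℕ → (Ω → ℝ) → Ω → ℝ)
    (hAVT : ∀ X : Ω → ℝ, AV T X = X)
    (hAVrec : ∀ t, t < T → ∀ X : Ω → ℝ, ∀ ω,
      AV t X ω = (1 - α)⁻¹ * ∫ u in α..(1 : ℝ), condVaR (ℱ t) μ u (AV (t + 1) X) ω)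
    (κ κ₂ : ℝ)
    (hκ : κ = (1 - α)⁻¹ * ∫ u in α..(1 : ℝ), quantileFun (distFun μ (Z 1)) u)
    (hκ₂ : κ₂ = (1 - α)⁻¹ * ∫ u in α..(1 : ℝ), quantileFun (distFun μ (fun ω => Z 1 ω ^ 2)) u) :
    ∀ t, t < T → ∀ᵐ ω ∂μ,
      AV t (L T) ω
        ≤ κ * Real.sqrt (a₀ * ∑ k ∈ Finset.range (T - t - 1), (a₁ * κ₂ + b) ^ k
            + σ (t + 1) ω ^ 2 * (a₁ * κ₂ + b) ^ (T - t - 1)) := by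
  obtain ⟨hα0, hα1⟩ := hα
  simp only [inv_sub_mul_intervalIntegral_eq_integral_cond hα1] at hAVrec hκ hκ₂
  have hZ : ∀ s, 1 ≤ s → s ≤ T → IdentDistrib (Z s) (Z 1) μ μ := fun s h1 h2 =>
    ⟨(hZmeas s).aemeasurable, (hZmeas 1).aemeasurable, hident s h1 h2⟩
  have hq₁0 : ∀ u ∈ Ioo α 1, 0 ≤ quantileFun (distFun μ (Z 1)) u := fun u hu =>
    hqpos.le.trans (monotoneOn_quantileFun_distFun μ (hZmeas 1) ⟨hα0, hα1⟩
      ⟨hα0.trans hu.1, hu.2⟩ hu.1.le)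
  have hκ0 : 0 ≤ κ := hκ ▸ integral_nonneg_of_ae ((ae_cond_mem measurableSet_Ioo).mono hq₁0)
  have hκ₂0 : 0 ≤ κ₂ := hκ₂ ▸ integral_nonneg_of_ae ((ae_cond_mem measurableSet_Ioo).mono
    fun u hu => quantileFun_distFun_nonneg μ ((hZmeas 1).pow_const 2) (fun ω => sq_nonneg _)
      ⟨hα0.trans hu.1, hu.2⟩)
  set c := a₁ * κ₂ + b with hc_def
  suffices ∀ n t, t + n + 1 = T → ∀ᵐ ω ∂μ, AV t (L T) ω
      ≤ κ * √(a₀ * ∑ k ∈ Finset.range n, c ^ k + σ (t + 1) ω ^ 2 * c ^ n) from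
    fun t ht => this (T - t - 1) t (by omega)
  intro n
  induction n with
  | zero =>
    intro t ht
    obtain rfl : T = t + 1 := by omega
    have hZt := hZ (t + 1) le_add_self le_rfl
    have hZ1 : Integrable (Z 1) μ := ((memLp_two_iff_integrable_sq
      (hZmeas 1).aestronglyMeasurable).2 hZ2int).integrable one_le_two
    filter_upwards [integral_condVaR_le_mul_integral_quantileFun (hℱ t) (hZmeas (t + 1))
      (hindep t) hα0.le hα1 (hZt.integrable_iff.2 hZ1) (hZt.distFun_eq ▸ hq₁0) (hσmeas t)
      (fun ω => (hσpos _ ω).le) (ae_of_all _ fun ω => (hL (t + 1) le_add_self le_rfl ω).le)]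
      with ω hω
    rw [hAVrec t t.lt_succ_self, hAVT]
    simp only [Finset.range_zero, Finset.sum_empty, mul_zero, zero_add, pow_zero, mul_one]
    rwa [Real.sqrt_sq (hσpos _ ω).le, mul_comm, hκ, ← hZt.distFun_eq]
  | succ n ih =>
    intro t ht
    have hZt : IdentDistrib (fun ω => Z (t + 1) ω ^ 2) (fun ω => Z 1 ω ^ 2) μ μ :=
      (hZ (t + 1) le_add_self (by omega)).comp (continuous_pow 2).measurable
    have hσ2 : Measurable[ℱ t] fun ω => σ (t + 1) ω ^ 2 := (hσmeas t).pow_const 2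
    have hXW : ∀ᵐ ω ∂μ, AV (t + 1) (L T) ω ≤ κ * √((a₀ * ∑ k ∈ Finset.range n, c ^ k
        + (a₀ + b * σ (t + 1) ω ^ 2) * c ^ n)
        + a₁ * σ (t + 1) ω ^ 2 * c ^ n * Z (t + 1) ω ^ 2) := by
      filter_upwards [ih (t + 1) (by omega)] with ω hω
      rw [hσrec (t + 1 + 1) (by omega) (by omega), Nat.add_sub_cancel,
        hL (t + 1) (by omega) (by omega)] at hω
      convert hω using 3
      ring
    filter_upwards [integral_condVaR_le_mul_sqrt_integral_quantileFun (hℱ t)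
      ((hZmeas (t + 1)).pow_const 2) (indep_of_indep_of_le_left (hindep t) ((comap_measurable _).pow_const 2).comap_le)
      hα0.le hα1 (hZt.integrable_iff.2 hZ2int) (fun ω => sq_nonneg _) hκ0
      ((((hσ2.const_mul b).const_add a₀).mul_const _).const_add _) ((hσ2.const_mul a₁).mul_const _)
      (fun ω => by positivity) (fun ω => by positivity) hXW] with ω hω
    rw [hAVrec t (by omega)]
    refine hω.trans_eq ?_
    rw [hZt.distFun_eq, ← hκ₂, Finset.sum_range_succ, pow_succ, hc_def]
    ring_nf

/-- Jensen upper bound for the time-consistent Average Value-at-Risk of the terminal GARCH(1,1)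
loss: `ÃVaR^α_t(L_T) ≤ κ √(a₀ Σ_{k=0}^{T-t-2} (a₁ κ₂ + b)^k + σ_{t+1}² (a₁ κ₂ + b)^{T-t-1})`
with `κ = (1/(1−α)) ∫_α^1 F_Z^{-1}(u) du` and `κ₂ = (1/(1−α)) ∫_α^1 F_{Z²}^{-1}(u) du`. -/
theorem timeConsistent_AVaR_upper_bound {Ω : Type*} [mΩ : MeasurableSpace Ω]
    [StandardBorelSpace Ω] [Nonempty Ω] (μ : Measure Ω) [IsProbabilityMeasure μ]
    (ℱ : ℕ → MeasurableSpace Ω) (hℱ : ∀ t, ℱ t ≤ mΩ) (hmonoℱ : Monotone ℱ)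
    (T : ℕ) (a₀ a₁ b : ℝ) (ha₀ : 0 < a₀) (ha₁ : 0 < a₁) (hb : 0 < b)
    (L σ Z : ℕ → Ω → ℝ)
    -- GARCH(1,1) dynamics
    (hL : ∀ t, 1 ≤ t → t ≤ T → ∀ ω, L t ω = σ t ω * Z t ω)
    (hσrec : ∀ t, 1 ≤ t → t ≤ T → ∀ ω,
      σ t ω ^ 2 = a₀ + a₁ * L (t - 1) ω ^ 2 + b * σ (t - 1) ω ^ 2)
    (hσmeas : ∀ t, Measurable[ℱ t] (σ (t + 1))) (hσpos : ∀ t ω, 0 < σ t ω)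
    (hZmeas : ∀ t, Measurable (Z t))
    -- innovations independent of the past
    (hindep : ∀ t, Indep (MeasurableSpace.comap (Z (t + 1)) Real.measurableSpace) (ℱ t) μ)
    -- identically distributed, symmetric innovations with nice distribution function
    (hident : ∀ t, 1 ≤ t → t ≤ T → μ.map (Z t) = μ.map (Z 1))
    (hsym : μ.map (Z 1) = μ.map (fun ω => -(Z 1 ω)))
    (hmono : StrictMono (distFun μ (Z 1))) (hcont : Continuous (distFun μ (Z 1)))
    (α : ℝ) (hα : α ∈ Set.Ioo (0 : ℝ) 1) (hqpos : 0 < quantileFun (distFun μ (Z 1)) α)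
    (hZ2int : Integrable (fun ω => Z 1 ω ^ 2) μ)
    -- time-consistent AVaR defined by backward recursion
    (AV : ℕ → (Ω → ℝ) → Ω → ℝ)
    (hAVT : ∀ X : Ω → ℝ, AV T X = X)
    (hAVrec : ∀ t, t < T → ∀ X : Ω → ℝ, ∀ ω,
      AV t X ω = (1 - α)⁻¹ * ∫ u in α..(1 : ℝ), condVaR (ℱ t) μ u (AV (t + 1) X) ω)
    (κ κ₂ : ℝ)
    (hκ : κ = (1 - α)⁻¹ * ∫ u in α..(1 : ℝ), quantileFun (distFun μ (Z 1)) u)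
    (hκ₂ : κ₂ = (1 - α)⁻¹ * ∫ u in α..(1 : ℝ), quantileFun (distFun μ (fun ω => Z 1 ω ^ 2)) u) :
    ∀ t, t < T → ∀ᵐ ω ∂μ,
      AV t (L T) ω
        ≤ κ * Real.sqrt (a₀ * ∑ k ∈ Finset.range (T - t - 1), (a₁ * κ₂ + b) ^ k
            + σ (t + 1) ω ^ 2 * (a₁ * κ₂ + b) ^ (T - t - 1)) :=
  timeConsistent_AVaR_upper_bound_general (mΩ := mΩ) μ ℱ hℱ T a₀ a₁ b ha₀ ha₁ hb L σ Z hL hσrec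
    hσmeas hσpos hZmeas hindep hident α hα hqpos hZ2int AV hAVT hAVrec κ κ₂ hκ hκ₂
end

section
/- If F_Z is a distribution function whose excess distribution over the threshold u equals the Generalized Pareto distribution G_{ξ,β} with ξ > 0, i.e. F_u(x) = (F_Z(x+u) − F_Z(u))/(1 − F_Z(u)) = 1 − (1 + ξx/β)^{−1/ξ} for x ≥ 0, then for all α ≥ F_Z(u): (i) F_Z^{-1}(α) = u + (β/ξ)(((1−α)/(1−F_Z(u)))^{−ξ} − 1); and (ii) if moreover ξ < 1, (1/(1−α)) ∫_α^1 F_Z^{-1}(y) dy = F_Z^{-1}(α)/(1−ξ) + (β − ξu)/(1−ξ). -/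
open MeasureTheory Set

/-!
Above the threshold `u` the hypothesis determines `F` explicitly, and inverting the Pareto
survival function `(1 + ξ x / β) ^ (-1 / ξ)` shows that `F` attains every level `γ ∈ [F u, 1)`
at `u + (β / ξ) (((1 - γ) / (1 - F u)) ^ (-ξ) - 1)`; strict monotonicity makes this point the
quantile. On `[F u, 1)` the quantile function is therefore affine in `(1 - y) ^ (-ξ)`, and its
tail average over `[α, 1]` follows from the power rule, which needs `ξ < 1` for integrability at `1`.
-/

theorem quantileFun_apply_of_strictMono {F : ℝ → ℝ} (hF : StrictMono F) (x : ℝ) :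
    quantileFun F (F x) = x := by
  have hlevel : {z | F x ≤ F z} = Ici x := by
    ext z
    simp only [mem_ofPred_eq, mem_Ici, hF.le_iff_le]
  rw [quantileFun, hlevel, csInf_Ici]

theorem gpd_survival_rpow_inverse {β ξ r : ℝ} (hβ : β ≠ 0) (hξ : ξ ≠ 0) (hr : 0 < r) :
    (1 + ξ * (β / ξ * (r ^ (-ξ) - 1)) / β) ^ (-1 / ξ) = r := by
  have hbase : 1 + ξ * (β / ξ * (r ^ (-ξ) - 1)) / β = r ^ (-ξ) := by
    field_simp
    ring
  rw [hbase, ← Real.rpow_mul hr.le, show -ξ * (-1 / ξ) = 1 by field_simp, Real.rpow_one]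

theorem quantileFun_eq_of_gpd_excess {F : ℝ → ℝ} (hmono : StrictMono F)
    {u β ξ : ℝ} (hβ : 0 < β) (hξ : 0 < ξ) (hu : F u < 1)
    (hGPD : ∀ x : ℝ, 0 ≤ x →
      (F (x + u) - F u) / (1 - F u) = 1 - (1 + ξ * x / β) ^ (-1 / ξ))
    {γ : ℝ} (hγ₁ : F u ≤ γ) (hγ₂ : γ < 1) :
    quantileFun F γ = u + β / ξ * (((1 - γ) / (1 - F u)) ^ (-ξ) - 1) := by
  have hc : 0 < 1 - F u := sub_pos.mpr hu
  set r := (1 - γ) / (1 - F u) with hr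
  have hr₀ : 0 < r := div_pos (sub_pos.mpr hγ₂) hc
  have hr₁ : r ≤ 1 := (div_le_one hc).mpr (by linarith)
  set x := β / ξ * (r ^ (-ξ) - 1)
  have hx : 0 ≤ x := mul_nonneg (div_pos hβ hξ).le
    (sub_nonneg.mpr (Real.one_le_rpow_of_pos_of_le_one_of_nonpos hr₀ hr₁ (neg_nonpos.mpr hξ.le)))
  have hexcess := hGPD x hx
  rw [gpd_survival_rpow_inverse hβ.ne' hξ.ne' hr₀, div_eq_iff hc.ne', sub_mul, hr,
    div_mul_cancel₀ _ hc.ne'] at hexcess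
  have hFx : F (x + u) = γ := by linarith
  rw [← hFx, quantileFun_apply_of_strictMono hmono, add_comm]

theorem gpd_quantile_eq_const_add_mul_rpow {u β ξ c y : ℝ} (hc : 0 < c) (hy : y ≤ 1) :
    u + β / ξ * (((1 - y) / c) ^ (-ξ) - 1) = u - β / ξ + β / ξ * c ^ ξ * (1 - y) ^ (-ξ) := by
  rw [Real.div_rpow (sub_nonneg.mpr hy) hc.le, Real.rpow_neg hc.le, div_inv_eq_mul]
  ring

theorem average_integral_const_add_mul_one_sub_rpow {A B ξ α : ℝ} (hξ : ξ < 1) (hα : α < 1) :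
    (1 - α)⁻¹ * ∫ y in α..1, (A + B * (1 - y) ^ (-ξ)) = A + B * (1 - α) ^ (-ξ) / (1 - ξ) := by
  have hα' : 0 < 1 - α := sub_pos.mpr hα
  have hintegrable : IntervalIntegrable (fun x : ℝ => B * x ^ (-ξ)) volume 0 (1 - α) :=
    (intervalIntegral.intervalIntegrable_rpow' (by linarith)).const_mul B
  have hintegral : ∫ y in α..1, (A + B * (1 - y) ^ (-ξ))
      = (1 - α) * A + B * ((1 - α) ^ (1 - ξ) / (1 - ξ)) := by
    rw [intervalIntegral.integral_comp_sub_left (fun x => A + B * x ^ (-ξ)), sub_self,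
      intervalIntegral.integral_add intervalIntegrable_const hintegrable,
      intervalIntegral.integral_const, intervalIntegral.integral_const_mul,
      integral_rpow (Or.inl (by linarith)), Real.zero_rpow (by linarith), neg_add_eq_sub,
      smul_eq_mul, sub_zero, sub_zero]
  rw [hintegral, sub_eq_add_neg (1 : ℝ) ξ, Real.rpow_add hα', Real.rpow_one]
  field_simp

theorem gpd_quantile_and_avar_general (F : ℝ → ℝ) (hmono : StrictMono F)
    (u β ξ : ℝ) (hβ : 0 < β) (hξ : 0 < ξ) (hu : F u < 1)
    (hGPD : ∀ x : ℝ, 0 ≤ x →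
      (F (x + u) - F u) / (1 - F u) = 1 - (1 + ξ * x / β) ^ (-1 / ξ))
    (α : ℝ) (hα₁ : F u ≤ α) (hα₂ : α < 1) :
    quantileFun F α = u + (β / ξ) * (((1 - α) / (1 - F u)) ^ (-ξ) - 1) ∧
    (ξ < 1 →
      (1 - α)⁻¹ * ∫ y in α..(1 : ℝ), quantileFun F y
        = quantileFun F α / (1 - ξ) + (β - ξ * u) / (1 - ξ)) := by
  have hc : 0 < 1 - F u := sub_pos.mpr hu
  have hquantile : ∀ y ∈ Ico α 1, quantileFun F y
      = u - β / ξ + β / ξ * (1 - F u) ^ ξ * (1 - y) ^ (-ξ) := fun y hy => by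
    rw [quantileFun_eq_of_gpd_excess hmono hβ hξ hu hGPD (hα₁.trans hy.1) hy.2,
      gpd_quantile_eq_const_add_mul_rpow hc hy.2.le]
  refine ⟨quantileFun_eq_of_gpd_excess hmono hβ hξ hu hGPD hα₁ hα₂, fun hξ₁ => ?_⟩
  rw [intervalIntegral.integral_congr_Ioo_of_le hα₂.le
      (fun y hy => hquantile y (Ioo_subset_Ico_self hy)),
    average_integral_const_add_mul_one_sub_rpow hξ₁ hα₂, hquantile α ⟨le_rfl, hα₂⟩]
  field_simp [(sub_pos.mpr hξ₁).ne']
  ring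

/-- If the excess distribution of `F` over the threshold `u` is the Generalized Pareto
distribution `G_{ξ,β}` with `ξ > 0`, then for `α ≥ F(u)`:
(i) `F^{-1}(α) = u + (β/ξ)(((1−α)/(1−F(u)))^{−ξ} − 1)`, and
(ii) if `ξ < 1`, `(1/(1−α)) ∫_α^1 F^{-1}(y) dy = F^{-1}(α)/(1−ξ) + (β − ξu)/(1−ξ)`. -/
theorem gpd_quantile_and_avar (F : ℝ → ℝ) (hcont : Continuous F) (hmono : StrictMono F)
    (hrange : ∀ x, F x ∈ Set.Icc (0 : ℝ) 1)
    (u β ξ : ℝ) (hβ : 0 < β) (hξ : 0 < ξ) (hu : F u < 1)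
    (hGPD : ∀ x : ℝ, 0 ≤ x →
      (F (x + u) - F u) / (1 - F u) = 1 - (1 + ξ * x / β) ^ (-1 / ξ))
    (α : ℝ) (hα₁ : F u ≤ α) (hα₂ : α < 1) :
    quantileFun F α = u + (β / ξ) * (((1 - α) / (1 - F u)) ^ (-ξ) - 1) ∧
    (ξ < 1 →
      (1 - α)⁻¹ * ∫ y in α..(1 : ℝ), quantileFun F y
        = quantileFun F α / (1 - ξ) + (β - ξ * u) / (1 - ξ)) :=
  gpd_quantile_and_avar_general F hmono u β ξ hβ hξ hu hGPD α hα₁ hα₂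
end
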